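/- arXiv:1801.00616 — 3 statements merged into one kernel-verified Lean document; each statement's English description precedes it below -/
import Mathlib

section
/- Let β be a mixed base, m ≥ 1, and let 𝒞 ⊆ ℕ^m satisfy adequate covering: for all X ∈ ℕ^m and all h < σ_β(X) there is C ∈ 𝒞 with X - C ∈ ℕ^m and σ_β(X - C) = h. Let X ∈ ℕ^m, n = σ_β(X), h ≠ n, N = max{L : n_L ≠ h_L}, and suppose some D ∈ ℕ^m satisfies X_{≤N} - D ∈ ℕ^m, X - D ∈ ℕ^m, and σ_β(X - D) = h. Then there exists C ∈ 𝒞 with X - C ∈ ℕ^m and σ_β(X - C) = h. -/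
/-
Subtracting `D ≤ X mod β̂_{N+1}` only touches the digits `≤ N`, so the problem reduces to the
truncated position `W = X mod β̂_{N+1}`, all of whose components lie below `β̂_{N+1}`.
There we induct on `∑ W`. If the target `σ(W - D)` is below `σ(W)`, adequate covering applies
directly. Otherwise some `W i₀ - D i₀` is at least `β̂_N`. Lowering `W i₀` by `β̂_N` decreases,
modulo `β_N`, digit `N` of both `σ(W)` and `σ(W - D)` by one and leaves all other digits alone,
so the smaller position satisfies the same hypotheses, and a move `C` found there gives
`σ(W - C) = σ(W - D)` as well.
-/

open scoped BigOperators

/-- β̂_L = β_0 ⋯ β_{L-1}, the place value of digit L in mixed base β. -/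
def bhat (β : ℕ → ℕ) (L : ℕ) : ℕ := ∏ i ∈ Finset.range L, β i

/-- The L-th digit of n in the mixed base β. -/
def mdigit (β : ℕ → ℕ) (n L : ℕ) : ℕ := n / bhat β L % β L

/-- Digit-wise addition modulo β_L in mixed base β. -/
def moplus (β : ℕ → ℕ) (n h : ℕ) : ℕ :=
  ∑ L ∈ Finset.range (n + h + 1), ((mdigit β n L + mdigit β h L) % β L) * bhat β L

/-- Digit-wise subtraction modulo β_L in mixed base β. -/
def mominus (β : ℕ → ℕ) (n h : ℕ) : ℕ :=
  ∑ L ∈ Finset.range (n + h + 1), ((β L + mdigit β n L - mdigit β h L) % β L) * bhat β L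

/-- σ_β(X) = x^0 ⊕ ⋯ ⊕ x^{m-1}: the digit-wise Nim sum in mixed base β. -/
def msigma (β : ℕ → ℕ) {m : ℕ} (X : Fin m → ℕ) : ℕ :=
  ∑ L ∈ Finset.range (∑ i, X i + 1), ((∑ i, mdigit β (X i) L) % β L) * bhat β L

/-- Hamming weight: number of nonzero components. -/
def hamwt {m : ℕ} (C : Fin m → ℕ) : ℕ := (Finset.univ.filter (fun i => C i ≠ 0)).card

/-- ord_β(n): the largest L with β̂_L ∣ n (⊤ for n = 0). -/
def mord (β : ℕ → ℕ) (n : ℕ) : ℕ∞ :=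
  if n = 0 then ⊤ else (Nat.findGreatest (fun L => bhat β L ∣ n) n : ℕ∞)

/-- 𝒞 is a Sprague-Grundy system of σ_β: its members are nonzero moves and
σ_β satisfies the mex recursion of the take-away game Γ(ℕ^m, 𝒞), i.e. σ_β is the
Sprague-Grundy function of that game. -/
def IsSGSystem (β : ℕ → ℕ) {m : ℕ} (𝒞 : Set (Fin m → ℕ)) : Prop :=
  (∀ C ∈ 𝒞, C ≠ 0) ∧
  ∀ X : Fin m → ℕ, msigma β X =
    sInf {n : ℕ | ∀ C ∈ 𝒞, (∀ i, C i ≤ X i) → msigma β (fun i => X i - C i) ≠ n}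


open Finset

section MixedRadix

variable {β : ℕ → ℕ}

lemma bhat_succ (β : ℕ → ℕ) (L : ℕ) : bhat β (L + 1) = bhat β L * β L :=
  prod_range_succ _ _

lemma bhat_pos (hβ : ∀ L, 2 ≤ β L) (L : ℕ) : 0 < bhat β L :=
  prod_pos fun i _ => by have := hβ i; omega

lemma bhat_dvd_bhat {K L : ℕ} (h : K ≤ L) : bhat β K ∣ bhat β L :=
  prod_dvd_prod_of_subset _ _ _ (range_subset_range.mpr h)

lemma bhat_le_bhat (hβ : ∀ L, 2 ≤ β L) {K L : ℕ} (h : K ≤ L) : bhat β K ≤ bhat β L :=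
  Nat.le_of_dvd (bhat_pos hβ L) (bhat_dvd_bhat h)

lemma lt_bhat_self (hβ : ∀ L, 2 ≤ β L) (n : ℕ) : n < bhat β n := by
  induction n with
  | zero => exact bhat_pos hβ 0
  | succ n ih => rw [bhat_succ]; nlinarith [hβ n]

lemma mdigit_eq_mod_div (n L : ℕ) : mdigit β n L = n % bhat β (L + 1) / bhat β L := by
  rw [mdigit, bhat_succ, Nat.mod_mul_right_div_self]

lemma mdigit_eq_zero_of_lt {n L : ℕ} (h : n < bhat β L) : mdigit β n L = 0 := by
  rw [mdigit, Nat.div_eq_of_lt h, Nat.zero_mod]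

lemma mdigit_add_bhat_mul_of_lt {K L : ℕ} (hL : L < K) (n q : ℕ) :
    mdigit β (n + bhat β K * q) L = mdigit β n L := by
  obtain ⟨p, hp⟩ := bhat_dvd_bhat (β := β) (Nat.succ_le_of_lt hL)
  rw [mdigit_eq_mod_div, mdigit_eq_mod_div, hp, mul_assoc, Nat.add_mul_mod_self_left]

lemma mdigit_add_bhat_mul_self {K n : ℕ} (hn : n < bhat β K) (q : ℕ) :
    mdigit β (n + bhat β K * q) K = q % β K := by
  rw [mdigit, Nat.add_mul_div_left _ _ (by omega), Nat.div_eq_of_lt hn, zero_add]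

lemma mdigit_add_bhat_mul_of_le {K L n : ℕ} (hn : n < bhat β K) (hL : K ≤ L) (q : ℕ) :
    mdigit β (n + bhat β K * q) L = mdigit β (bhat β K * q) L := by
  obtain ⟨p, hp⟩ := bhat_dvd_bhat (β := β) hL
  have hK : 0 < bhat β K := by omega
  simp only [mdigit, hp, ← Nat.div_div_eq_div_mul, Nat.add_mul_div_left _ _ hK,
    Nat.div_eq_of_lt hn, Nat.mul_div_cancel_left _ hK, zero_add]

lemma sum_mul_bhat_lt (hβ : ∀ L, 2 ≤ β L) (c : ℕ → ℕ) (hc : ∀ L, c L < β L) (K : ℕ) :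
    ∑ L ∈ range K, c L * bhat β L < bhat β K := by
  induction K with
  | zero => exact bhat_pos hβ 0
  | succ K ih =>
      rw [sum_range_succ, bhat_succ]
      nlinarith [hc K]

lemma mdigit_sum_mul_bhat (hβ : ∀ L, 2 ≤ β L) (c : ℕ → ℕ) (hc : ∀ L, c L < β L) (K M : ℕ) :
    mdigit β (∑ L ∈ range K, c L * bhat β L) M = if M < K then c M else 0 := by
  induction K with
  | zero => simp [mdigit]
  | succ K ih =>
      rcases lt_trichotomy M K with hM | rfl | hM
      · rw [sum_range_succ, mul_comm (c K), mdigit_add_bhat_mul_of_lt hM, ih, if_pos hM,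
          if_pos (by omega)]
      · rw [sum_range_succ, mul_comm (c M), mdigit_add_bhat_mul_self (sum_mul_bhat_lt hβ c hc M),
          Nat.mod_eq_of_lt (hc M), if_pos (by omega)]
      · rw [if_neg (by omega)]
        exact mdigit_eq_zero_of_lt
          ((sum_mul_bhat_lt hβ c hc (K + 1)).trans_le (bhat_le_bhat hβ hM))

lemma eq_of_mdigit_eq (hβ : ∀ L, 2 ≤ β L) {a b : ℕ} (h : ∀ L, mdigit β a L = mdigit β b L) :
    a = b := by
  have hmod : ∀ K, a % bhat β K = b % bhat β K := by
    intro K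
    induction K with
    | zero => simp [bhat, Nat.mod_one]
    | succ K ih =>
        have hK := h K
        rw [mdigit, mdigit] at hK
        rw [bhat_succ, Nat.mod_mul, Nat.mod_mul, ih, hK]
  have ha : a < bhat β (a + b) := (lt_bhat_self hβ a).trans_le (bhat_le_bhat hβ (by omega))
  have hb : b < bhat β (a + b) := (lt_bhat_self hβ b).trans_le (bhat_le_bhat hβ (by omega))
  calc a = a % bhat β (a + b) := (Nat.mod_eq_of_lt ha).symm
    _ = b % bhat β (a + b) := hmod _
    _ = b := Nat.mod_eq_of_lt hb

lemma lt_bhat_of_mdigit_eq_zero (hβ : ∀ L, 2 ≤ β L) {n K : ℕ}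
    (h : ∀ L, K ≤ L → mdigit β n L = 0) : n < bhat β K := by
  have hK := bhat_pos hβ K
  suffices n % bhat β K = n from this ▸ Nat.mod_lt n hK
  refine eq_of_mdigit_eq hβ fun L => ?_
  rcases lt_or_ge L K with hL | hL
  · conv_rhs => rw [← Nat.mod_add_div n (bhat β K), mdigit_add_bhat_mul_of_lt hL]
  · rw [h L hL, mdigit_eq_zero_of_lt ((Nat.mod_lt _ hK).trans_le (bhat_le_bhat hβ hL))]

lemma mdigit_add_bhat (hβ : ∀ L, 2 ≤ β L) {x N : ℕ} (hx : x + bhat β N < bhat β (N + 1))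
    (L : ℕ) : mdigit β (x + bhat β N) L = mdigit β x L + if L = N then 1 else 0 := by
  have hN := bhat_pos hβ N
  rcases lt_trichotomy L N with hL | rfl | hL
  · rw [if_neg hL.ne, add_zero, ← mdigit_add_bhat_mul_of_lt hL x 1, mul_one]
  · have hdiv : x / bhat β L + 1 < β L := by
      rw [← Nat.add_div_right _ hN, Nat.div_lt_iff_lt_mul hN, mul_comm, ← bhat_succ]
      exact hx
    rw [if_pos rfl, mdigit, mdigit, Nat.add_div_right _ hN, Nat.mod_eq_of_lt hdiv,
      Nat.mod_eq_of_lt (by omega)]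
  · have hle := bhat_le_bhat hβ (show N + 1 ≤ L by omega)
    rw [if_neg hL.ne', mdigit_eq_zero_of_lt (hx.trans_le hle),
      mdigit_eq_zero_of_lt ((by omega : x < bhat β (N + 1)).trans_le hle)]

end MixedRadix

def digitSum (β : ℕ → ℕ) {m : ℕ} (Y : Fin m → ℕ) (L : ℕ) : ℕ := ∑ i, mdigit β (Y i) L

section NimSum

variable {β : ℕ → ℕ} {m : ℕ}

lemma mdigit_msigma (hβ : ∀ L, 2 ≤ β L) (Y : Fin m → ℕ) (L : ℕ) :
    mdigit β (msigma β Y) L = digitSum β Y L % β L := by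
  rw [msigma, mdigit_sum_mul_bhat hβ _ (fun L => Nat.mod_lt _ (by have := hβ L; omega))]
  split_ifs with hL
  · rfl
  · have hY : ∀ i, Y i < bhat β L := fun i =>
      calc Y i ≤ ∑ j, Y j := single_le_sum (fun _ _ => Nat.zero_le _) (mem_univ i)
        _ < bhat β (∑ j, Y j) := lt_bhat_self hβ _
        _ ≤ bhat β L := bhat_le_bhat hβ (by omega)
    rw [digitSum, sum_eq_zero fun i _ => mdigit_eq_zero_of_lt (hY i), Nat.zero_mod]

lemma msigma_eq_msigma_iff (hβ : ∀ L, 2 ≤ β L) {Y Z : Fin m → ℕ} :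
    msigma β Y = msigma β Z ↔ ∀ L, digitSum β Y L ≡ digitSum β Z L [MOD β L] := by
  refine ⟨fun h L => ?_, fun h => eq_of_mdigit_eq hβ fun L => ?_⟩
  · have := congrArg (mdigit β · L) h
    simpa only [mdigit_msigma hβ, Nat.ModEq] using this
  · rw [mdigit_msigma hβ, mdigit_msigma hβ]
    exact h L

lemma msigma_lt_bhat (hβ : ∀ L, 2 ≤ β L) {Y : Fin m → ℕ} {K : ℕ} (h : ∀ i, Y i < bhat β K) :
    msigma β Y < bhat β K := by
  refine lt_bhat_of_mdigit_eq_zero hβ fun L hL => ?_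
  rw [mdigit_msigma hβ, digitSum,
    sum_eq_zero fun i _ => mdigit_eq_zero_of_lt ((h i).trans_le (bhat_le_bhat hβ hL)),
    Nat.zero_mod]

lemma exists_bhat_le_of_mdigit_msigma_ne (hβ : ∀ L, 2 ≤ β L) {Y Z : Fin m → ℕ} {N : ℕ}
    (hne : mdigit β (msigma β Y) N ≠ mdigit β (msigma β Z) N) (hle : msigma β Z ≤ msigma β Y) :
    ∃ i, bhat β N ≤ Y i := by
  by_contra! hsmall
  have hY := msigma_lt_bhat hβ hsmall
  exact hne ((mdigit_eq_zero_of_lt hY).trans (mdigit_eq_zero_of_lt (hle.trans_lt hY)).symm)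

lemma digitSum_of_eq_add_bhat (hβ : ∀ L, 2 ≤ β L) {Y Y' : Fin m → ℕ} {i₀ : Fin m} {N : ℕ}
    (h₀ : Y i₀ = Y' i₀ + bhat β N) (hlt : Y i₀ < bhat β (N + 1))
    (hne : ∀ i, i ≠ i₀ → Y i = Y' i) (L : ℕ) :
    digitSum β Y L = digitSum β Y' L + if L = N then 1 else 0 := by
  rw [digitSum, digitSum, ← add_sum_erase _ _ (mem_univ i₀), ← add_sum_erase _ _ (mem_univ i₀),
    sum_congr rfl fun i hi => by rw [hne i (ne_of_mem_erase hi)], h₀,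
    mdigit_add_bhat hβ (h₀ ▸ hlt)]
  ring

lemma mdigit_msigma_sub_of_le_mod (hβ : ∀ L, 2 ≤ β L) {K : ℕ} (X C : Fin m → ℕ)
    (hC : ∀ i, C i ≤ X i % bhat β K) (L : ℕ) :
    mdigit β (msigma β fun i => X i - C i) L =
      if L < K then mdigit β (msigma β fun i => X i % bhat β K - C i) L
      else mdigit β (msigma β X) L := by
  have hsplit : ∀ i, X i - C i = (X i % bhat β K - C i) + bhat β K * (X i / bhat β K) := by
    intro i
    have := Nat.mod_add_div (X i) (bhat β K)
    have := hC i
    omega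
  have hlt : ∀ i, X i % bhat β K - C i < bhat β K :=
    fun i => (Nat.sub_le _ _).trans_lt (Nat.mod_lt _ (bhat_pos hβ K))
  simp only [mdigit_msigma hβ, digitSum, hsplit]
  split_ifs with hL
  · simp only [mdigit_add_bhat_mul_of_lt hL]
  · replace hL := not_lt.mp hL
    congr 2
    funext i
    conv_rhs => rw [← Nat.mod_add_div (X i) (bhat β K),
      mdigit_add_bhat_mul_of_le (Nat.mod_lt _ (bhat_pos hβ K)) hL]
    rw [mdigit_add_bhat_mul_of_le (hlt i) hL]

end NimSum

def IsAdequateCovering (β : ℕ → ℕ) {m : ℕ} (𝒞 : Set (Fin m → ℕ)) : Prop :=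
  ∀ X : Fin m → ℕ, ∀ h < msigma β X,
    ∃ C ∈ 𝒞, (∀ i, C i ≤ X i) ∧ msigma β (fun i => X i - C i) = h

theorem exists_mem_msigma_sub_eq_of_mdigit_ne {β : ℕ → ℕ} (hβ : ∀ L, 2 ≤ β L) {m : ℕ}
    {𝒞 : Set (Fin m → ℕ)} (hcov : IsAdequateCovering β 𝒞) {N : ℕ} (W D : Fin m → ℕ)
    (hW : ∀ i, W i < bhat β (N + 1)) (hD : ∀ i, D i ≤ W i)
    (hne : mdigit β (msigma β fun i => W i - D i) N ≠ mdigit β (msigma β W) N) :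
    ∃ C ∈ 𝒞, (∀ i, C i ≤ W i) ∧
      msigma β (fun i => W i - C i) = msigma β (fun i => W i - D i) := by
  induction hs : ∑ i, W i using Nat.strong_induction_on generalizing W D with
  | _ s ih =>
  by_cases hlt : msigma β (fun i => W i - D i) < msigma β W
  · exact hcov W _ hlt
  obtain ⟨i₀, hi₀⟩ := exists_bhat_le_of_mdigit_msigma_ne hβ hne (not_lt.mp hlt)
  have hN := bhat_pos hβ N
  set W' := Function.update W i₀ (W i₀ - bhat β N)
  have hW'i₀ : W' i₀ = W i₀ - bhat β N := Function.update_self _ _ _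
  have hW'ne : ∀ i, i ≠ i₀ → W' i = W i := fun i hi => Function.update_of_ne hi _ _
  have hW'le : ∀ i, W' i ≤ W i := fun i => by
    rcases eq_or_ne i i₀ with rfl | hi
    · omega
    · rw [hW'ne i hi]
  have hD' : ∀ i, D i ≤ W' i := fun i => by
    rcases eq_or_ne i i₀ with rfl | hi
    · rw [hW'i₀]; omega
    · rw [hW'ne i hi]; exact hD i
  have hdigits : ∀ C : Fin m → ℕ, C i₀ ≤ W' i₀ → ∀ L, digitSum β (fun i => W i - C i) L =
      digitSum β (fun i => W' i - C i) L + if L = N then 1 else 0 := fun C hC =>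
    digitSum_of_eq_add_bhat hβ (by omega) ((Nat.sub_le _ _).trans_lt (hW i₀))
      fun i hi => by rw [hW'ne i hi]
  have hdigitsW : digitSum β W N = digitSum β W' N + 1 := by
    simpa using digitSum_of_eq_add_bhat hβ (Y := W) (Y' := W') (by omega) (hW i₀)
      (fun i hi => (hW'ne i hi).symm) N
  have hne' : mdigit β (msigma β fun i => W' i - D i) N ≠ mdigit β (msigma β W') N := by
    rw [mdigit_msigma hβ, mdigit_msigma hβ]
    intro h
    apply hne
    rw [mdigit_msigma hβ, mdigit_msigma hβ, hdigits D (hD' i₀), if_pos rfl, hdigitsW]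
    exact Nat.ModEq.add_right 1 h
  have hsum : ∑ i, W' i < s := hs ▸ sum_lt_sum (fun i _ => hW'le i)
    ⟨i₀, mem_univ _, by omega⟩
  obtain ⟨C, hC, hCW', hCD⟩ :=
    ih _ hsum W' D (fun i => (hW'le i).trans_lt (hW i)) hD' hne' rfl
  refine ⟨C, hC, fun i => (hCW' i).trans (hW'le i), ?_⟩
  rw [msigma_eq_msigma_iff hβ] at hCD ⊢
  intro L
  rw [hdigits C (hCW' i₀), hdigits D (hD' i₀)]
  exact (hCD L).add_right _

theorem stmt16_general (β : ℕ → ℕ) (hβ : ∀ L, 2 ≤ β L) {m : ℕ}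
    (𝒞 : Set (Fin m → ℕ))
    (hcov : ∀ X : Fin m → ℕ, ∀ h < msigma β X,
      ∃ C ∈ 𝒞, (∀ i, C i ≤ X i) ∧ msigma β (fun i => X i - C i) = h)
    (X : Fin m → ℕ) (n h N : ℕ) (hn : n = msigma β X)
    (hN : mdigit β n N ≠ mdigit β h N)
    (D : Fin m → ℕ) (hDle : ∀ i, D i ≤ X i % bhat β (N + 1))
    (hDcov : msigma β (fun i => X i - D i) = h) :
    ∃ C ∈ 𝒞, (∀ i, C i ≤ X i) ∧ msigma β (fun i => X i - C i) = h := by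
  have htrunc := mdigit_msigma_sub_of_le_mod hβ (K := N + 1) X
  have hne : mdigit β (msigma β fun i => X i % bhat β (N + 1) - D i) N ≠
      mdigit β (msigma β fun i => X i % bhat β (N + 1)) N := by
    have hD := htrunc D hDle N
    have h0 := htrunc 0 (fun _ => Nat.zero_le _) N
    simp only [Pi.zero_apply, Nat.sub_zero, if_pos N.lt_succ_self] at hD h0
    rw [← hD, ← h0, hDcov, ← hn]
    exact hN.symm
  obtain ⟨C, hC, hCW, hCD⟩ := exists_mem_msigma_sub_eq_of_mdigit_ne hβ hcov _ D
    (fun i => Nat.mod_lt _ (bhat_pos hβ _)) hDle hne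
  refine ⟨C, hC, fun i => (hCW i).trans (Nat.mod_le _ _), ?_⟩
  rw [← hDcov]
  refine eq_of_mdigit_eq hβ fun L => ?_
  rw [htrunc C hCW, htrunc D hDle, hCD]

/-- If some D with X_{≤N} - D ∈ ℕ^m covers X at h, then so does any adequately
covering set 𝒞. -/
theorem stmt16 (β : ℕ → ℕ) (hβ : ∀ L, 2 ≤ β L) {m : ℕ} (hm : 1 ≤ m)
    (𝒞 : Set (Fin m → ℕ))
    (hcov : ∀ X : Fin m → ℕ, ∀ h < msigma β X,
      ∃ C ∈ 𝒞, (∀ i, C i ≤ X i) ∧ msigma β (fun i => X i - C i) = h)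
    (X : Fin m → ℕ) (n h N : ℕ) (hn : n = msigma β X) (hne : h ≠ n)
    (hN : mdigit β n N ≠ mdigit β h N)
    (hNmax : ∀ L, N < L → mdigit β n L = mdigit β h L)
    (D : Fin m → ℕ) (hDle : ∀ i, D i ≤ X i % bhat β (N + 1))
    (hDle' : ∀ i, D i ≤ X i)
    (hDcov : msigma β (fun i => X i - D i) = h) :
    ∃ C ∈ 𝒞, (∀ i, C i ≤ X i) ∧ msigma β (fun i => X i - C i) = h :=
  stmt16_general β hβ 𝒞 hcov X n h N hn hN D hDle hDcov
end

section
/- Let β be a mixed base and m ≥ 1. For S ⊆ {0,...,m-1} and 𝒞 ⊆ ℕ^m, define 𝒞|_S as the set of restrictions to coordinates in S of elements of 𝒞 that vanish outside S. If 𝒞 is a Sprague-Grundy system of σ_{β,m}, then for every S ⊆ {0,...,m-1}, 𝒞|_S satisfies adequate covering for σ_{β,|S|}: for every X' ∈ ℕ^{|S|} and every h < σ_β(X'), there exists C' ∈ 𝒞|_S with X' - C' ∈ ℕ^{|S|} and σ_β(X' - C') = h. -/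
/-!
Extend X' by zero outside S to a position X of the full game. Zero coordinates contribute
no digits, so σ_β(X) = σ_β(X'), and the mex recursion at X yields a move C ∈ 𝒞 from X to a
position of value h. Since C ≤ X, the move vanishes outside S, and restricting it to S gives
the required C'.
-/

open scoped BigOperators

open Function

lemma msigma_comp_of_eq_zero_off_range (β : ℕ → ℕ) {k m : ℕ} {e : Fin k → Fin m}
    (he : Injective e) {X : Fin m → ℕ} (hX : ∀ i ∉ Set.range e, X i = 0) :
    msigma β (X ∘ e) = msigma β X := by
  have hsum : ∀ f : ℕ → ℕ, f 0 = 0 → ∑ j, f (X (e j)) = ∑ i, f (X i) := fun f hf =>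
    Fintype.sum_of_injective e he _ _ (fun i hi => by rw [hX i hi, hf]) fun _ => rfl
  have hdigit : ∀ L, ∑ j, mdigit β (X (e j)) L = ∑ i, mdigit β (X i) L := fun L =>
    hsum (mdigit β · L) (by simp [mdigit])
  have htotal : ∑ j, X (e j) = ∑ i, X i := hsum (fun n => n) rfl
  simp only [msigma, comp_apply, htotal, hdigit]

lemma IsSGSystem.exists_move_of_lt {β : ℕ → ℕ} {m : ℕ} {𝒞 : Set (Fin m → ℕ)}
    (h𝒞 : IsSGSystem β 𝒞) {X : Fin m → ℕ} {h : ℕ} (hh : h < msigma β X) :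
    ∃ C ∈ 𝒞, (∀ i, C i ≤ X i) ∧ msigma β (fun i => X i - C i) = h := by
  by_contra! hnone
  exact hh.not_ge (h𝒞.2 X ▸ Nat.sInf_le hnone)

/-- The subset S ⊆ {0,…,m-1} of coordinates, with |S| = k, is given by a strictly monotone
map e : Fin k → Fin m. -/
theorem stmt17_general (β : ℕ → ℕ) {m : ℕ}
    (𝒞 : Set (Fin m → ℕ)) (h𝒞 : IsSGSystem β 𝒞)
    (k : ℕ) (e : Fin k → Fin m) (he : StrictMono e) :
    ∀ X' : Fin k → ℕ, ∀ h < msigma β X',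
      ∃ C' : Fin k → ℕ,
        (∃ C ∈ 𝒞, (∀ j, C (e j) = C' j) ∧ ∀ i, (∀ j, e j ≠ i) → C i = 0) ∧
        (∀ j, C' j ≤ X' j) ∧ msigma β (fun j => X' j - C' j) = h := by
  intro X' h hh
  set X : Fin m → ℕ := extend e X' 0
  have hXe : X ∘ e = X' := funext (he.injective.extend_apply X' 0)
  have hX0 : ∀ i ∉ Set.range e, X i = 0 := fun i hi => extend_apply' _ _ _ hi
  obtain ⟨C, hC, hCX, hCh⟩ := h𝒞.exists_move_of_lt (X := X) (h := h)
    (by rwa [← msigma_comp_of_eq_zero_off_range β he.injective hX0, hXe])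
  have hC0 : ∀ i ∉ Set.range e, C i = 0 := fun i hi => Nat.eq_zero_of_le_zero (hX0 i hi ▸ hCX i)
  refine ⟨C ∘ e, ⟨C, hC, fun _ => rfl, fun i hi => hC0 i ?_⟩, fun j => hXe ▸ hCX (e j), ?_⟩
  · rintro ⟨j, rfl⟩
    exact hi j rfl
  rw [← hCh, ← msigma_comp_of_eq_zero_off_range β he.injective (X := fun i => X i - C i)
    fun i hi => by simp [hX0 i hi], ← hXe]
  rfl

/-- Restrictions of a Sprague-Grundy system adequately cover. Here the subset
S ⊆ {0,…,m-1} of coordinates, with |S| = k, is given by a strictly monotone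
map e : Fin k → Fin m. -/
theorem stmt17 (β : ℕ → ℕ) (hβ : ∀ L, 2 ≤ β L) {m : ℕ}
    (𝒞 : Set (Fin m → ℕ)) (h𝒞 : IsSGSystem β 𝒞)
    (k : ℕ) (e : Fin k → Fin m) (he : StrictMono e) :
    ∀ X' : Fin k → ℕ, ∀ h < msigma β X',
      ∃ C' : Fin k → ℕ,
        (∃ C ∈ 𝒞, (∀ j, C (e j) = C' j) ∧ ∀ i, (∀ j, e j ≠ i) → C i = 0) ∧
        (∀ j, C' j ≤ X' j) ∧ msigma β (fun j => X' j - C' j) = h :=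
  stmt17_general β 𝒞 h𝒞 k e he
end

section
/- Let β be a mixed base with β_0 ≥ 2, β_L = 2 for L ≥ 1, and m = 2. For the cyclic-Nimhoff function φ(x,y) = β_0·(⌊x/β_0⌋ XOR ⌊y/β_0⌋) + ((x + y) mod β_0), we have φ(x,y) = x ⊕_β y where ⊕_β is digit-wise addition modulo β_L in mixed base β. -/
open scoped BigOperators

/-!
With β = (β₀, 2, 2, …) the place values are β̂_0 = 1 and β̂_{k+1} = β₀·2^k, and the digits of n
beyond the first are the binary digits of ⌊n/β₀⌋. So x ⊕_β y is (x + y) mod β₀ plus β₀ times the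
number whose k-th binary digit is the sum mod 2 of those of ⌊x/β₀⌋ and ⌊y/β₀⌋, i.e. their XOR.
-/

theorem Nat.sum_range_div_pow_mod_mul_pow (b n N : ℕ) :
    ∑ k ∈ Finset.range N, n / b ^ k % b * b ^ k = n % b ^ N := by
  induction N with
  | zero => simp [Nat.mod_one]
  | succ N ih => rw [Finset.sum_range_succ, ih, Nat.mod_pow_succ, mul_comm (b ^ N)]

theorem Nat.sum_range_div_two_pow_mod_two_xor (a b N : ℕ) :
    ∑ k ∈ Finset.range N, (a / 2 ^ k % 2 + b / 2 ^ k % 2) % 2 * 2 ^ k = (a ^^^ b) % 2 ^ N := by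
  rw [← Nat.sum_range_div_pow_mod_mul_pow]
  refine Finset.sum_congr rfl fun k _ => ?_
  rw [Nat.xor_div_two_pow, Nat.xor_mod_two_eq, ← Nat.add_mod]

theorem mdigit_zero (β : ℕ → ℕ) (n : ℕ) : mdigit β n 0 = n % β 0 := by
  simp [mdigit, bhat]

theorem bhat_succ_of_binary_tail {β : ℕ → ℕ} (hβ : ∀ L, 1 ≤ L → β L = 2) (k : ℕ) :
    bhat β (k + 1) = β 0 * 2 ^ k := by
  rw [bhat, Finset.prod_range_succ', mul_comm,
    Finset.prod_congr rfl fun i _ => hβ (i + 1) (Nat.le_add_left 1 i)]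
  simp only [Finset.prod_const, Finset.card_range]

theorem mdigit_succ_of_binary_tail {β : ℕ → ℕ} (hβ : ∀ L, 1 ≤ L → β L = 2) (n k : ℕ) :
    mdigit β n (k + 1) = n / β 0 / 2 ^ k % 2 := by
  rw [mdigit, bhat_succ_of_binary_tail hβ, hβ (k + 1) (Nat.le_add_left 1 k),
    Nat.div_div_eq_div_mul]

theorem stmt18_general (β : ℕ → ℕ) (hβ : ∀ L, 1 ≤ L → β L = 2)
    (x y : ℕ) :
    β 0 * ((x / β 0) ^^^ (y / β 0)) + (x + y) % β 0 = moplus β x y := by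
  have hxor : x / β 0 ^^^ y / β 0 < 2 ^ (x + y) := by
    have hx : x / β 0 < 2 ^ (x + y) :=
      (Nat.div_le_self x _).trans_lt ((Nat.le_add_right x y).trans_lt Nat.lt_two_pow_self)
    have hy : y / β 0 < 2 ^ (x + y) :=
      (Nat.div_le_self y _).trans_lt ((Nat.le_add_left y x).trans_lt Nat.lt_two_pow_self)
    exact Nat.xor_lt_two_pow hx hy
  have hhigh : ∀ k ∈ Finset.range (x + y),
      (mdigit β x (k + 1) + mdigit β y (k + 1)) % β (k + 1) * bhat β (k + 1) =
        β 0 * ((x / β 0 / 2 ^ k % 2 + y / β 0 / 2 ^ k % 2) % 2 * 2 ^ k) := fun k _ => by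
    rw [mdigit_succ_of_binary_tail hβ, mdigit_succ_of_binary_tail hβ,
      hβ (k + 1) (Nat.le_add_left 1 k), bhat_succ_of_binary_tail hβ]
    ring
  rw [moplus, Finset.sum_range_succ', Finset.sum_congr rfl hhigh, ← Finset.mul_sum,
    Nat.sum_range_div_two_pow_mod_two_xor, Nat.mod_eq_of_lt hxor, mdigit_zero, mdigit_zero,
    ← Nat.add_mod, bhat, Finset.prod_range_zero, mul_one]

/-- For β = (β₀, 2, 2, …), the cyclic-Nimhoff value
β₀·(⌊x/β₀⌋ XOR ⌊y/β₀⌋) + ((x+y) mod β₀) equals the mixed-base Nim sum x ⊕_β y. -/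
theorem stmt18 (β : ℕ → ℕ) (hβ0 : 2 ≤ β 0) (hβ : ∀ L, 1 ≤ L → β L = 2)
    (x y : ℕ) :
    β 0 * ((x / β 0) ^^^ (y / β 0)) + (x + y) % β 0 = moplus β x y :=
  stmt18_general β hβ x y
end
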